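/- Suppose Assumption (i) holds, fix a ∈ (0, 1−q+γ), and suppose α_T = O(T^{−(1+a)/2}) and ε_T = O(T^{−1/2}) as T → ∞. Then T^{1/2} a_T → 0 in probability as T → ∞; in particular the first half of Assumption (ii) holds. -/
import Mathlib


open MeasureTheory Filter
open scoped ENNReal NNReal

noncomputable section

/-- The setting of the P-O (penalized-to-ordinary) estimation procedure:
a probability space, open bounded convex parameter sets `Θ0 ⊆ ℝ^{p₀}` and
`N0 ⊆ ℝ^{n₀}`, a true value `θstar ∈ cl Θ0` with nonempty active set `J¹` and
zero set `J⁰`, first-step estimators `θtil, νtil`, tuning constants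
`q ∈ (0,1]`, `γ > -(1-q)`, positive deterministic sequences `α, ε`, and a
second-step estimator `(θhat, νhat)`. -/
structure POSetting (Ω : Type) [MeasurableSpace Ω] (p₀ n₀ : ℕ) where
  P : Measure Ω
  probP : IsProbabilityMeasure P
  Θ0 : Set (EuclideanSpace ℝ (Fin p₀))
  N0 : Set (EuclideanSpace ℝ (Fin n₀))
  Θ0_open : IsOpen Θ0
  Θ0_bdd : Bornology.IsBounded Θ0
  Θ0_conv : Convex ℝ Θ0
  N0_open : IsOpen N0
  N0_bdd : Bornology.IsBounded N0
  N0_conv : Convex ℝ N0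
  θstar : EuclideanSpace ℝ (Fin p₀)
  θstar_mem : θstar ∈ closure Θ0
  J0_ne : ∃ j, θstar j = 0
  J1_ne : ∃ j, θstar j ≠ 0
  θtil : ℝ → Ω → EuclideanSpace ℝ (Fin p₀)
  νtil : ℝ → Ω → EuclideanSpace ℝ (Fin n₀)
  θtil_meas : ∀ T, Measurable (θtil T)
  νtil_meas : ∀ T, Measurable (νtil T)
  θtil_mem : ∀ T, 1 ≤ T → ∀ ω, θtil T ω ∈ closure Θ0
  νtil_mem : ∀ T, 1 ≤ T → ∀ ω, νtil T ω ∈ closure N0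
  q : ℝ
  γ : ℝ
  q_pos : 0 < q
  q_le_one : q ≤ 1
  γ_gt : -(1 - q) < γ
  α : ℝ → ℝ
  ε : ℝ → ℝ
  α_pos : ∀ T, 0 < α T
  ε_pos : ∀ T, 0 < ε T
  θhat : ℝ → Ω → EuclideanSpace ℝ (Fin p₀)
  νhat : ℝ → Ω → EuclideanSpace ℝ (Fin n₀)
  θhat_meas : ∀ T, Measurable (θhat T)
  νhat_meas : ∀ T, Measurable (νhat T)
  θhat_mem : ∀ T, 1 ≤ T → ∀ ω, θhat T ω ∈ closure Θ0
  νhat_mem : ∀ T, 1 ≤ T → ∀ ω, νhat T ω ∈ closure N0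

namespace POSetting

variable {Ω : Type} [MeasurableSpace Ω] {p₀ n₀ : ℕ}

/-- The random weight `κ^θ_{T,j} = α_T |ε_T + θtil_{T,j}|^{-γ}`. -/
def κθ (S : POSetting Ω p₀ n₀) (T : ℝ) (ω : Ω) (j : Fin p₀) : ℝ :=
  S.α T * |S.ε T + S.θtil T ω j| ^ (-S.γ)

/-- The random weight `κ^ν_{T,j} = α_T |ε_T + νtil_{T,j}|^{-γ}`. -/
def κν (S : POSetting Ω p₀ n₀) (T : ℝ) (ω : Ω) (j : Fin n₀) : ℝ :=
  S.α T * |S.ε T + S.νtil T ω j| ^ (-S.γ)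

/-- The penalized objective `Q^{(q)}_T(θ, ν)`. -/
def Q (S : POSetting Ω p₀ n₀) (T : ℝ) (ω : Ω)
    (θ : EuclideanSpace ℝ (Fin p₀)) (ν : EuclideanSpace ℝ (Fin n₀)) : ℝ :=
  (∑ j, ((θ j - S.θtil T ω j) ^ 2 + S.κθ T ω j * |θ j| ^ S.q))
    + ∑ j, ((ν j - S.νtil T ω j) ^ 2 + S.κν T ω j * |ν j| ^ S.q)

/-- `(θhat, νhat)` minimizes `Q^{(q)}_T` over `cl Θ0 × cl N0`, `P`-a.s. -/
def SecondStepMin (S : POSetting Ω p₀ n₀) : Prop :=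
  ∀ T : ℝ, 1 ≤ T → ∀ᵐ ω ∂S.P, ∀ θ ∈ closure S.Θ0, ∀ ν ∈ closure S.N0,
    S.Q T ω (S.θhat T ω) (S.νhat T ω) ≤ S.Q T ω θ ν

/-- `a_T = max_{j ∈ J¹} κ^θ_{T,j}`. -/
def aT (S : POSetting Ω p₀ n₀) (T : ℝ) (ω : Ω) : ℝ :=
  ⨆ j : {j : Fin p₀ // S.θstar j ≠ 0}, S.κθ T ω j

/-- `b_T = min_{j ∈ J⁰} κ^θ_{T,j}`. -/
def bT (S : POSetting Ω p₀ n₀) (T : ℝ) (ω : Ω) : ℝ :=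
  ⨅ j : {j : Fin p₀ // S.θstar j = 0}, S.κθ T ω j

/-- Assumption (i): `√T (θtil_T - θstar) = O_p(1)`. -/
def AssumptionI (S : POSetting Ω p₀ n₀) : Prop :=
  ∀ δ : ℝ, 0 < δ → ∃ M : ℝ, 0 < M ∧
    Filter.limsup (fun T : ℝ =>
        S.P {ω | Real.sqrt T * ‖S.θtil T ω - S.θstar‖ > M}) Filter.atTop
      < ENNReal.ofReal δ

/-- Assumption (i)': `√T (θtil_T - θstar)` is `L^{∞-}`-bounded. -/
def AssumptionI' (S : POSetting Ω p₀ n₀) : Prop :=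
  ∀ p : ℝ, 1 ≤ p → ∃ C : ℝ≥0∞, C < ⊤ ∧ ∀ T : ℝ, 1 ≤ T →
    ∫⁻ ω, ENNReal.ofReal (Real.sqrt T * ‖S.θtil T ω - S.θstar‖) ^ p ∂S.P ≤ C

/-- Assumption (ii): `√T a_T = O_p(1)` and `T^{(2-q)/2} b_T → ∞` in probability. -/
def AssumptionII (S : POSetting Ω p₀ n₀) : Prop :=
  (∀ δ : ℝ, 0 < δ → ∃ M : ℝ, 0 < M ∧
      Filter.limsup (fun T : ℝ =>
          S.P {ω | Real.sqrt T * S.aT T ω > M}) Filter.atTop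
        < ENNReal.ofReal δ)
    ∧ ∀ M : ℝ, Filter.Tendsto
        (fun T : ℝ => S.P {ω | T ^ ((2 - S.q) / 2) * S.bT T ω ≤ M})
        Filter.atTop (nhds 0)

/-- Assumption (iv): there is `ε ∈ (-1+q, γ)` with `T^{-(1+γ-ε)/2} α_T⁻¹` bounded. -/
def AssumptionIV (S : POSetting Ω p₀ n₀) : Prop :=
  ∃ e : ℝ, -1 + S.q < e ∧ e < S.γ ∧ ∃ C : ℝ, ∀ T : ℝ, 1 ≤ T →
    T ^ (-(1 + S.γ - e) / 2) * (S.α T)⁻¹ ≤ C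

/-- The event `Ĵ⁰_T = J⁰`, i.e. the second-step estimator selects exactly the
true zero coordinates. -/
def CorrectSelection (S : POSetting Ω p₀ n₀) (T : ℝ) (ω : Ω) : Prop :=
  ∀ j, S.θhat T ω j = 0 ↔ S.θstar j = 0

end POSetting

private lemma euclid_abs_apply_le_norm {n : ℕ} (x : EuclideanSpace ℝ (Fin n)) (j : Fin n) :
    |x j| ≤ ‖x‖ := by
  rw [EuclideanSpace.norm_eq]
  calc |x j| = Real.sqrt (‖x j‖ ^ 2) := by
        rw [Real.sqrt_sq_eq_abs, Real.norm_eq_abs, abs_abs]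
    _ ≤ _ := Real.sqrt_le_sqrt (Finset.single_le_sum (f := fun i => ‖x i‖ ^ 2)
        (fun i _ => by positivity) (Finset.mem_univ j))

set_option maxHeartbeats 1600000 in
/-- **Theorem (the hyperparameter choice makes `√T a_T` vanish in probability).**
Under Assumption (i), if `a ∈ (0, 1-q+γ)`, `α_T = O(T^{-(1+a)/2})` and
`ε_T = O(T^{-1/2})` as `T → ∞`, then `T^{1/2} a_T → 0` in probability; in
particular the first half of Assumption (ii) holds. -/
theorem po_hyperparameter_aT_tendsto_zero
    {Ω : Type} [MeasurableSpace Ω] {p₀ n₀ : ℕ} (S : POSetting Ω p₀ n₀)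
    (hI : S.AssumptionI) (a : ℝ) (ha0 : 0 < a) (ha1 : a < 1 - S.q + S.γ)
    (hα : ∃ C : ℝ, ∀ᶠ T : ℝ in Filter.atTop, |S.α T| ≤ C * T ^ (-(1 + a) / 2))
    (hε : ∃ C : ℝ, ∀ᶠ T : ℝ in Filter.atTop, |S.ε T| ≤ C * T ^ (-(1 : ℝ) / 2)) :
    ∀ δ : ℝ, 0 < δ →
      Filter.Tendsto (fun T : ℝ => S.P {ω | |Real.sqrt T * S.aT T ω| > δ})
        Filter.atTop (nhds 0) := by
  classical
  obtain ⟨Cα, hCα⟩ := hα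
  obtain ⟨Cε, hCε⟩ := hε
  intro δ hδ
  haveI hne : Nonempty {j : Fin p₀ // S.θstar j ≠ 0} := by
    obtain ⟨j, hj⟩ := S.J1_ne; exact ⟨⟨j, hj⟩⟩
  rw [ENNReal.tendsto_nhds_zero]
  intro ε' hε'
  set δ' : ℝ := (min 1 ε').toReal with hδ'def
  have hmin_pos : (0 : ℝ≥0∞) < min 1 ε' := lt_min one_pos hε'
  have hmin_top : min 1 ε' ≠ ⊤ := (lt_of_le_of_lt (min_le_left _ _) ENNReal.one_lt_top).ne
  have hδ'pos : 0 < δ' := ENNReal.toReal_pos hmin_pos.ne' hmin_top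
  obtain ⟨M, hMpos, hlimsup⟩ := hI δ' hδ'pos
  have hev1 : ∀ᶠ T in Filter.atTop,
      S.P {ω | Real.sqrt T * ‖S.θtil T ω - S.θstar‖ > M} < ENNReal.ofReal δ' :=
    Filter.eventually_lt_of_limsup_lt hlimsup
  -- the per-coordinate bound constant
  set B : {j : Fin p₀ // S.θstar j ≠ 0} → ℝ :=
    fun j => max ((|S.θstar j.1| / 2) ^ (-S.γ)) ((Cε + M + ‖S.θstar‖) ^ (-S.γ)) with hB
  have hBnonneg : ∀ j, 0 ≤ B j := fun j =>
    le_max_of_le_left (Real.rpow_nonneg (by positivity) _)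
  -- eventual deterministic smallness conditions
  have hev2 : ∀ᶠ T : ℝ in Filter.atTop, ∀ j : {j : Fin p₀ // S.θstar j ≠ 0},
      (Cε + M) * T ^ (-(1 : ℝ)/2) ≤ |S.θstar j.1| / 2 := by
    rw [Filter.eventually_all]
    intro j
    have hpos : 0 < |S.θstar j.1| / 2 := by
      have h := j.2; have : 0 < |S.θstar j.1| := abs_pos.2 h
      linarith
    have ht : Filter.Tendsto (fun T : ℝ => (Cε + M) * T ^ (-(1 : ℝ)/2))
        Filter.atTop (nhds 0) := by
      have h := (tendsto_rpow_neg_atTop (y := (1 : ℝ)/2) (by norm_num)).const_mul (Cε + M)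
      simpa [neg_div, mul_zero] using h
    exact ht.eventually (eventually_le_nhds hpos)
  have hev3 : ∀ᶠ T : ℝ in Filter.atTop, ∀ j : {j : Fin p₀ // S.θstar j ≠ 0},
      Cα * B j * T ^ (-a/2) ≤ δ := by
    rw [Filter.eventually_all]
    intro j
    have ht : Filter.Tendsto (fun T : ℝ => Cα * B j * T ^ (-a/2))
        Filter.atTop (nhds 0) := by
      have h := (tendsto_rpow_neg_atTop (y := a/2) (by positivity)).const_mul (Cα * B j)
      simpa [neg_div, mul_zero] using h
    exact ht.eventually (eventually_le_nhds hδ)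
  -- the key containment of events, for large `T`
  have key : ∀ᶠ T : ℝ in Filter.atTop,
      S.P {ω | |Real.sqrt T * S.aT T ω| > δ}
        ≤ S.P {ω | Real.sqrt T * ‖S.θtil T ω - S.θstar‖ > M} := by
    filter_upwards [hCα, hCε, hev2, hev3, Filter.eventually_ge_atTop (1 : ℝ)]
      with T hCαT hCεT h2 h3 hT1
    refine measure_mono fun ω hω => ?_
    by_contra hcon
    simp only [Set.mem_setOf_eq, not_lt] at hcon
    have hT0 : (0 : ℝ) < T := lt_of_lt_of_le one_pos hT1
    have hsq : Real.sqrt T = T ^ ((1 : ℝ)/2) := Real.sqrt_eq_rpow T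
    have hsqpos : 0 < Real.sqrt T := Real.sqrt_pos.2 hT0
    have hrpos : (0 : ℝ) < T ^ (-(1 : ℝ)/2) := Real.rpow_pos_of_pos hT0 _
    have hrle1 : T ^ (-(1 : ℝ)/2) ≤ 1 :=
      Real.rpow_le_one_of_one_le_of_nonpos hT1 (by norm_num)
    have hεabs : |S.ε T| ≤ Cε * T ^ (-(1 : ℝ)/2) := hCεT
    have hCε0 : 0 < Cε := by
      have h0 : 0 < |S.ε T| := abs_pos.2 (S.ε_pos T).ne'
      nlinarith
    have hαle : S.α T ≤ Cα * T ^ (-(1 + a)/2) := (le_abs_self _).trans hCαT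
    have hCα0 : 0 < Cα := by
      have h0 : 0 < |S.α T| := abs_pos.2 (S.α_pos T).ne'
      have hre : (0 : ℝ) < T ^ (-(1 + a)/2) := Real.rpow_pos_of_pos hT0 _
      nlinarith
    -- norm bound
    have hnorm : ‖S.θtil T ω - S.θstar‖ ≤ M * T ^ (-(1 : ℝ)/2) := by
      have h' : ‖S.θtil T ω - S.θstar‖ ≤ M / Real.sqrt T := by
        rw [le_div_iff₀ hsqpos]
        calc ‖S.θtil T ω - S.θstar‖ * Real.sqrt T
            = Real.sqrt T * ‖S.θtil T ω - S.θstar‖ := mul_comm _ _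
          _ ≤ M := hcon
      have heq : M / Real.sqrt T = M * T ^ (-(1 : ℝ)/2) := by
        rw [hsq, div_eq_mul_inv, ← Real.rpow_neg hT0.le]
        norm_num
      rwa [heq] at h'
    -- per-coordinate bound on the weight
    have hκ : ∀ j : {j : Fin p₀ // S.θstar j ≠ 0},
        S.κθ T ω j.1 ≤ δ / Real.sqrt T := by
      intro j
      have hco : |S.θtil T ω j.1 - S.θstar j.1| ≤ M * T ^ (-(1 : ℝ)/2) := by
        have h := euclid_abs_apply_le_norm (S.θtil T ω - S.θstar) j.1
        have heq : (S.θtil T ω - S.θstar) j.1 = S.θtil T ω j.1 - S.θstar j.1 := rfl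
        rw [heq] at h
        exact h.trans hnorm
      set x : ℝ := |S.ε T + S.θtil T ω j.1| with hxdef
      have h2' : Cε * T ^ (-(1 : ℝ)/2) + M * T ^ (-(1 : ℝ)/2) ≤ |S.θstar j.1| / 2 := by
        have h := h2 j; rw [add_mul] at h; exact h
      have hlow : |S.θstar j.1| / 2 ≤ x := by
        have hdec : |S.θstar j.1| ≤ x + (|S.ε T| + |S.θtil T ω j.1 - S.θstar j.1|) := by
          have heq : S.θstar j.1 =
              (S.ε T + S.θtil T ω j.1) + (-(S.ε T) + -(S.θtil T ω j.1 - S.θstar j.1)) := by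
            ring
          calc |S.θstar j.1|
              = |(S.ε T + S.θtil T ω j.1) + (-(S.ε T) + -(S.θtil T ω j.1 - S.θstar j.1))| := by
                rw [← heq]
            _ ≤ |S.ε T + S.θtil T ω j.1| + |(-(S.ε T) + -(S.θtil T ω j.1 - S.θstar j.1))| :=
                abs_add_le _ _
            _ ≤ x + (|S.ε T| + |S.θtil T ω j.1 - S.θstar j.1|) := by
                have := abs_add_le (-(S.ε T)) (-(S.θtil T ω j.1 - S.θstar j.1))
                simp only [abs_neg] at this
                linarith
        linarith
      have hxpos : 0 < x := lt_of_lt_of_le (by have := abs_pos.2 j.2; linarith) hlow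
      have hup : x ≤ Cε + M + ‖S.θstar‖ := by
        have h1 : x ≤ |S.ε T| + |S.θtil T ω j.1| := abs_add_le _ _
        have h2'' : |S.θtil T ω j.1| ≤ |S.θstar j.1| + |S.θtil T ω j.1 - S.θstar j.1| := by
          have := abs_add_le (S.θstar j.1) (S.θtil T ω j.1 - S.θstar j.1)
          simpa using this
        have h3' : |S.θstar j.1| ≤ ‖S.θstar‖ := euclid_abs_apply_le_norm _ _
        have h4 : Cε * T ^ (-(1 : ℝ)/2) ≤ Cε := by
          nlinarith
        have h5 : M * T ^ (-(1 : ℝ)/2) ≤ M := by nlinarith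
        linarith
      have hxγ : x ^ (-S.γ) ≤ B j := by
        rcases le_or_gt 0 S.γ with h | h
        · exact le_max_of_le_left
            (Real.rpow_le_rpow_of_nonpos (by have := abs_pos.2 j.2; linarith) hlow
              (neg_nonpos.2 h))
        · exact le_max_of_le_right
            (Real.rpow_le_rpow (abs_nonneg _) hup (by linarith))
      have hκval : S.κθ T ω j.1 = S.α T * x ^ (-S.γ) := rfl
      have hstep : S.α T * x ^ (-S.γ) ≤ (Cα * T ^ (-(1 + a)/2)) * B j :=
        mul_le_mul hαle hxγ (Real.rpow_nonneg (abs_nonneg _) _)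
          (mul_nonneg hCα0.le (Real.rpow_pos_of_pos hT0 _).le)
      have hpow : T ^ ((1 : ℝ)/2) * T ^ (-(1 + a)/2) = T ^ (-a/2) := by
        rw [← Real.rpow_add hT0]
        congr 1
        ring
      have hfin : Real.sqrt T * S.κθ T ω j.1 ≤ δ := by
        calc Real.sqrt T * S.κθ T ω j.1
            ≤ Real.sqrt T * ((Cα * T ^ (-(1 + a)/2)) * B j) := by
              rw [hκval]
              exact mul_le_mul_of_nonneg_left hstep hsqpos.le
          _ = Cα * B j * (T ^ ((1 : ℝ)/2) * T ^ (-(1 + a)/2)) := by rw [hsq]; ring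
          _ = Cα * B j * T ^ (-a/2) := by rw [hpow]
          _ ≤ δ := h3 j
      rw [le_div_iff₀ hsqpos, mul_comm]
      exact hfin
    -- combine over the finite sup
    have haT : S.aT T ω ≤ δ / Real.sqrt T := ciSup_le hκ
    have haT0 : 0 ≤ S.aT T ω := by
      obtain ⟨j₀⟩ := hne
      have hκ0 : 0 ≤ S.κθ T ω j₀.1 :=
        mul_nonneg (S.α_pos T).le (Real.rpow_nonneg (abs_nonneg _) _)
      have hle : S.κθ T ω j₀.1 ≤ S.aT T ω :=
        le_ciSup (f := fun j : {j : Fin p₀ // S.θstar j ≠ 0} => S.κθ T ω j.1)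
          (Finite.bddAbove_range _) j₀
      exact hκ0.trans hle
    have : |Real.sqrt T * S.aT T ω| ≤ δ := by
      rw [abs_of_nonneg (mul_nonneg hsqpos.le haT0)]
      calc Real.sqrt T * S.aT T ω ≤ Real.sqrt T * (δ / Real.sqrt T) :=
            mul_le_mul_of_nonneg_left haT hsqpos.le
        _ = δ := by field_simp
    exact absurd hω (by simp only [Set.mem_setOf_eq]; exact not_lt.2 this)
  -- conclude
  filter_upwards [key, hev1] with T h1 h2
  calc S.P {ω | |Real.sqrt T * S.aT T ω| > δ}
      ≤ S.P {ω | Real.sqrt T * ‖S.θtil T ω - S.θstar‖ > M} := h1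
    _ ≤ ENNReal.ofReal δ' := h2.le
    _ = min 1 ε' := ENNReal.ofReal_toReal hmin_top
    _ ≤ ε' := min_le_right _ _
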